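/- Suppose T*_0 ⊆ T*_1 (so on the disagreement region S = T*_1 \ T*_0, the classifier T*_0 predicts negatively), and let T be a well-defined classifier with T*_0 ⊆ T ⊆ T*_1. Assume TPR_0(T*_0) > TPR_1(T*_1), TNR_0(T*_0) < TNR_1(T*_1), and the positivity conditions ∫_{T \ T*_0} f_{0,1} dν > 0, ∫_{T*_1 \ T} f_{1,1} dν > 0, ∫_{T \ T*_0} f_{0,0} dν > 0, ∫_{T*_1 \ T} f_{1,0} dν > 0. Then F_U(T) = F_DU + F_MU(T), and F_MU(T) > 0. -/

import Mathlib

open MeasureTheory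

/-- True positive rate of group `a` under classifier `T`: `TPR_a(T) = ∫_T f_{a,1} dν`. -/
noncomputable def tprOf {Ω : Type*} [MeasurableSpace Ω] (ν : Measure Ω)
    (f : Bool → Bool → Ω → ℝ) (a : Bool) (T : Set Ω) : ℝ :=
  ∫ x in T, f a true x ∂ν

/-- True negative rate of group `a` under classifier `T`: `TNR_a(T) = ∫_{Tᶜ} f_{a,0} dν`. -/
noncomputable def tnrOf {Ω : Type*} [MeasurableSpace Ω] (ν : Measure Ω)
    (f : Bool → Bool → Ω → ℝ) (a : Bool) (T : Set Ω) : ℝ :=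
  ∫ x in Tᶜ, f a false x ∂ν

/-- Equalized-odds unfairness. -/
noncomputable def unfairness {Ω : Type*} [MeasurableSpace Ω] (ν : Measure Ω)
    (f : Bool → Bool → Ω → ℝ) (T : Set Ω) : ℝ :=
  (1/2) * |tprOf ν f true T - tprOf ν f false T|
    + (1/2) * |tnrOf ν f true T - tnrOf ν f false T|

/-- Data unfairness relative to reference (per-group optimal) classifiers `T*_0, T*_1`. -/
noncomputable def dataUnfairness {Ω : Type*} [MeasurableSpace Ω] (ν : Measure Ω)
    (f : Bool → Bool → Ω → ℝ) (T0 T1 : Set Ω) : ℝ :=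
  (1/2) * |tprOf ν f false T0 - tprOf ν f true T1|
    + (1/2) * |tnrOf ν f false T0 - tnrOf ν f true T1|

/-- Model unfairness of `T` relative to reference classifiers `T*_0, T*_1`. -/
noncomputable def modelUnfairness {Ω : Type*} [MeasurableSpace Ω] (ν : Measure Ω)
    (f : Bool → Bool → Ω → ℝ) (T0 T1 T : Set Ω) : ℝ :=
  (1/2) * |(tprOf ν f false T - tprOf ν f false T0)
      - (tprOf ν f true T - tprOf ν f true T1)|
    + (1/2) * |(tnrOf ν f false T - tnrOf ν f false T0)
      - (tnrOf ν f true T - tnrOf ν f true T1)|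

/-! Since `T*_0 ⊆ T ⊆ T*_1`, moving from the reference classifiers to `T` only raises the
true positive rate of group 0 and lowers that of group 1 (by the masses of `f_{0,1}` on
`T \ T*_0` and of `f_{1,1}` on `T*_1 \ T`), and symmetrically for the true negative rates.
Hence for each rate the model gap has the same sign as the data gap, so the triangle
inequality `|d + m| ≤ |d| + |m|` between the two is an equality. -/

section Rates

variable {Ω : Type*} [MeasurableSpace Ω] {ν : Measure Ω} {f : Bool → Bool → Ω → ℝ} {a : Bool}
  {T T' : Set Ω}

theorem tprOf_sub_tprOf_of_subset (hT : MeasurableSet T) (hf : IntegrableOn (f a true) T' ν)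
    (h : T ⊆ T') :
    tprOf ν f a T' - tprOf ν f a T = ∫ x in T' \ T, f a true x ∂ν :=
  (setIntegral_sdiff hT hf h).symm

theorem tnrOf_sub_tnrOf_of_subset (hT' : MeasurableSet T') (hf : IntegrableOn (f a false) Tᶜ ν)
    (h : T ⊆ T') :
    tnrOf ν f a T - tnrOf ν f a T' = ∫ x in T' \ T, f a false x ∂ν := by
  rw [tnrOf, tnrOf, ← setIntegral_sdiff hT'.compl hf (Set.compl_subset_compl.2 h),
    compl_sdiff_compl]

end Rates

theorem abs_sub_eq_abs_add_abs_of_same_sign {p q p₀ q₁ : ℝ}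
    (h : 0 ≤ p₀ - q₁ ∧ 0 ≤ (p - p₀) - (q - q₁) ∨ p₀ - q₁ ≤ 0 ∧ (p - p₀) - (q - q₁) ≤ 0) :
    |q - p| = |p₀ - q₁| + |(p - p₀) - (q - q₁)| := by
  rw [abs_sub_comm, ← (abs_add_eq_add_abs_iff _ _).2 h]
  ring_nf

theorem unfairness_decomposition_equality_cond2_general
    {Ω : Type*} [MeasurableSpace Ω] (ν : Measure Ω)
    (f : Bool → Bool → Ω → ℝ)
    (hf_int : ∀ a y, Integrable (f a y) ν)
    (T0 T1 : Set Ω) (hT0 : MeasurableSet T0) (hT1 : MeasurableSet T1)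
    (T : Set Ω) (hT : MeasurableSet T) (hT0T : T0 ⊆ T) (hTT1 : T ⊆ T1)
    (htpr : tprOf ν f true T1 < tprOf ν f false T0)
    (htnr : tnrOf ν f false T0 < tnrOf ν f true T1)
    (hpos1 : 0 < ∫ x in T \ T0, f false true x ∂ν)
    (hpos2 : 0 < ∫ x in T1 \ T, f true true x ∂ν)
    (hpos3 : 0 < ∫ x in T \ T0, f false false x ∂ν)
    (hpos4 : 0 < ∫ x in T1 \ T, f true false x ∂ν) :
    unfairness ν f T = dataUnfairness ν f T0 T1 + modelUnfairness ν f T0 T1 T ∧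
      0 < modelUnfairness ν f T0 T1 T := by
  have htpr0 := tprOf_sub_tprOf_of_subset hT0 (hf_int false true).integrableOn hT0T
  have htpr1 := tprOf_sub_tprOf_of_subset hT (hf_int true true).integrableOn hTT1
  have htnr0 := tnrOf_sub_tnrOf_of_subset hT (hf_int false false).integrableOn hT0T
  have htnr1 := tnrOf_sub_tnrOf_of_subset hT1 (hf_int true false).integrableOn hTT1
  have htprGap : 0 < (tprOf ν f false T - tprOf ν f false T0)
      - (tprOf ν f true T - tprOf ν f true T1) := by linarith
  have htnrGap : (tnrOf ν f false T - tnrOf ν f false T0)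
      - (tnrOf ν f true T - tnrOf ν f true T1) < 0 := by linarith
  refine ⟨?_, ?_⟩
  · rw [unfairness, dataUnfairness, modelUnfairness,
      abs_sub_eq_abs_add_abs_of_same_sign (Or.inl ⟨by linarith, htprGap.le⟩),
      abs_sub_eq_abs_add_abs_of_same_sign (Or.inr ⟨by linarith, htnrGap.le⟩)]
    ring
  · rw [modelUnfairness]
    have := abs_pos_of_pos htprGap
    positivity

/-- Equality case of the unfairness decomposition (Condition 2 of Theorem 3):
if `T*_0 ⊆ T*_1` (so on the disagreement region `S = T*_1 \ T*_0` the classifier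
`T*_0` predicts negatively), `T` is well-defined (`T*_0 ⊆ T ⊆ T*_1`),
`TPR₀(T*_0) > TPR₁(T*_1)`, `TNR₀(T*_0) < TNR₁(T*_1)`, and the stated integrals are
strictly positive, then `F_U(T) = F_DU + F_MU(T)` and `F_MU(T) > 0`. -/
theorem unfairness_decomposition_equality_cond2
    {Ω : Type*} [MeasurableSpace Ω] (ν : Measure Ω) [SigmaFinite ν]
    (f : Bool → Bool → Ω → ℝ)
    (hf_meas : ∀ a y, Measurable (f a y))
    (hf_nonneg : ∀ a y x, 0 ≤ f a y x)
    (hf_int : ∀ a y, Integrable (f a y) ν)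
    (hf_one : ∀ a y, ∫ x, f a y x ∂ν = 1)
    (T0 T1 : Set Ω) (hT0 : MeasurableSet T0) (hT1 : MeasurableSet T1)
    (hsub : T0 ⊆ T1)
    (T : Set Ω) (hT : MeasurableSet T) (hT0T : T0 ⊆ T) (hTT1 : T ⊆ T1)
    (htpr : tprOf ν f true T1 < tprOf ν f false T0)
    (htnr : tnrOf ν f false T0 < tnrOf ν f true T1)
    (hpos1 : 0 < ∫ x in T \ T0, f false true x ∂ν)
    (hpos2 : 0 < ∫ x in T1 \ T, f true true x ∂ν)
    (hpos3 : 0 < ∫ x in T \ T0, f false false x ∂ν)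
    (hpos4 : 0 < ∫ x in T1 \ T, f true false x ∂ν) :
    unfairness ν f T = dataUnfairness ν f T0 T1 + modelUnfairness ν f T0 T1 T ∧
      0 < modelUnfairness ν f T0 T1 T :=
  unfairness_decomposition_equality_cond2_general ν f hf_int T0 T1 hT0 hT1 T hT hT0T hTT1 htpr htnr
    hpos1 hpos2 hpos3 hpos4
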